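/- arXiv:math/0406308 — 5 statements merged into one kernel-verified Lean document; each statement's English description precedes it below -/
import Mathlib

section
/- Let n be a positive integer and p a prime with n/2 < p ≤ n. Then for every integer j with 0 ≤ j ≤ n, the binomial coefficient C(n,j) is divisible by p if and only if n-p+1 ≤ j ≤ p-1. -/
/-!
For `p ≤ n < 2p` the prime `p` divides `n!` exactly once. Since
`n! = C(n,j) · j! · (n-j)!`, the prime `p` divides `C(n,j)` precisely when it divides
neither `j!` nor `(n-j)!`, i.e. when `j < p` and `n - j < p`.
-/

open Nat Finset

theorem Nat.Prime.not_sq_dvd_factorial {p n : ℕ} (hp : p.Prime) (h : n < 2 * p) :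
    ¬ p ^ 2 ∣ n ! := by
  have hlog : log p n < 2 :=
    log_lt_of_lt_pow' two_ne_zero (by nlinarith [hp.two_le])
  rw [hp.pow_dvd_factorial_iff hlog, Ico_succ_singleton, sum_singleton, pow_one, not_le]
  exact (Nat.div_lt_iff_lt_mul hp.pos).2 (by omega)

theorem not_dvd_factorial_of_dvd_choose {p n j : ℕ} (hsq : ¬ p ^ 2 ∣ n !) (hj : j ≤ n)
    (h : p ∣ n.choose j) : ¬ p ∣ j ! ∧ ¬ p ∣ (n - j)! := by
  have hfac : n.choose j * j ! * (n - j)! = n ! := choose_mul_factorial_mul_factorial hj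
  rw [sq] at hsq
  refine ⟨fun hj' => hsq ?_, fun hnj' => hsq ?_⟩
  · exact hfac ▸ dvd_mul_of_dvd_left (mul_dvd_mul h hj') _
  · exact hfac ▸ mul_dvd_mul (dvd_mul_of_dvd_left h _) hnj'

theorem Nat.Prime.dvd_choose_iff_of_le_of_lt_two_mul {p n j : ℕ} (hp : p.Prime)
    (h1 : n < 2 * p) (h2 : p ≤ n) (hj : j ≤ n) :
    p ∣ n.choose j ↔ j < p ∧ n - j < p := by
  refine ⟨fun h => ?_, fun ⟨hjp, hnjp⟩ => hp.dvd_choose hjp hnjp h2⟩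
  obtain ⟨hjp, hnjp⟩ := not_dvd_factorial_of_dvd_choose (hp.not_sq_dvd_factorial h1) hj h
  rw [hp.dvd_factorial, not_le] at hjp hnjp
  exact ⟨hjp, hnjp⟩

theorem prime_dvd_choose_iff_general (n p : ℕ) (hp : p.Prime)
    (h1 : n < 2 * p) (h2 : p ≤ n) (j : ℕ) (hj : j ≤ n) :
    p ∣ n.choose j ↔ n - p + 1 ≤ j ∧ j ≤ p - 1 := by
  rw [hp.dvd_choose_iff_of_le_of_lt_two_mul h1 h2 hj]
  omega

/-- For a positive integer `n` and a prime `p` with `n/2 < p ≤ n`, and any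
`0 ≤ j ≤ n`, the binomial coefficient `C(n,j)` is divisible by `p` if and only
if `n - p + 1 ≤ j ≤ p - 1`. -/
theorem prime_dvd_choose_iff (n p : ℕ) (hn : 0 < n) (hp : p.Prime)
    (h1 : n < 2 * p) (h2 : p ≤ n) (j : ℕ) (hj : j ≤ n) :
    p ∣ n.choose j ↔ n - p + 1 ≤ j ∧ j ≤ p - 1 :=
  prime_dvd_choose_iff_general n p hp h1 h2 j hj
end

section
/- Let f ∈ ℚ[x] be an irreducible polynomial, let p be a prime, let K be a finite extension of ℚ_p, and let α ∈ K be a root of f. Then the degree [ℚ_p(α):ℚ_p] divides the order of the Galois group of f over ℚ. -/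
open Polynomial IntermediateField

/-- Let `f ∈ ℚ[x]` be irreducible, `p` a prime, `K` a finite extension of `ℚ_p`,
and `α ∈ K` a root of `f`.  Then the degree `[ℚ_p(α) : ℚ_p]` divides the order
of the Galois group of `f` over `ℚ`. -/
theorem finrank_adjoin_root_dvd_card_gal
    (f : Polynomial ℚ) (hf : Irreducible f) (p : ℕ) [Fact p.Prime]
    (K : Type) [Field K] [Algebra ℚ_[p] K] [FiniteDimensional ℚ_[p] K]
    (α : K) (hroot : Polynomial.aeval α (f.map (algebraMap ℚ ℚ_[p])) = 0) :
    Module.finrank ℚ_[p] ℚ_[p]⟮α⟯ ∣ Nat.card f.Gal := by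
  classical
  set φ : ℚ →+* ℚ_[p] := algebraMap ℚ ℚ_[p] with hφ
  have hf0 : f ≠ 0 := hf.ne_zero
  have hg0 : f.map φ ≠ 0 := Polynomial.map_ne_zero hf0
  set L := (f.map φ).SplittingField with hL
  haveI : IsScalarTower ℚ ℚ_[p] L :=
    IsScalarTower.of_algebraMap_eq' (Subsingleton.elim _ _)
  have hmapeq : (algebraMap ℚ_[p] L).comp φ = algebraMap ℚ L :=
    (IsScalarTower.algebraMap_eq ℚ ℚ_[p] L).symm
  have hsplits : (f.map (algebraMap ℚ L)).Splits := by
    have := SplittingField.splits (f.map φ)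
    rwa [Polynomial.map_map, hmapeq] at this
  haveI : Fact ((f.map (algebraMap ℚ L)).Splits) := ⟨hsplits⟩
  -- the restriction-of-scalars monoid hom
  let r : (f.map φ).Gal →* (L ≃ₐ[ℚ] L) :=
    { toFun := fun σ => AlgEquiv.restrictScalars ℚ σ
      map_one' := rfl
      map_mul' := fun _ _ => rfl }
  let ψ : (f.map φ).Gal →* f.Gal := (Gal.restrict f L).comp r
  -- roots of `f` in `L` coincide with those of `f.map φ`
  have hroots : f.rootSet L = (f.map φ).rootSet L := by
    simp only [rootSet, aroots, Polynomial.map_map, hmapeq]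
  have hψ : Function.Injective ψ := by
    rw [injective_iff_map_eq_one]
    intro σ hσ
    have hfix : ∀ x ∈ (f.map φ).rootSet L, σ x = x := by
      intro x hx
      rw [← hroots] at hx
      have := Gal.restrict_smul (p := f) (AlgEquiv.restrictScalars ℚ σ) ⟨x, hx⟩
      rw [show Gal.restrict f L (AlgEquiv.restrictScalars ℚ σ) = 1 from hσ, one_smul] at this
      exact this.symm
    have htop : Algebra.adjoin ℚ_[p] ((f.map φ).rootSet L) = ⊤ :=
      Polynomial.SplittingField.adjoin_rootSet (f.map φ)
    refine AlgEquiv.ext fun x => ?_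
    have hx : x ∈ Algebra.adjoin ℚ_[p] ((f.map φ).rootSet L) := htop ▸ trivial
    show σ x = x
    induction hx using Algebra.adjoin_induction with
    | mem x hx => exact hfix x hx
    | algebraMap r => exact σ.commutes r
    | add x y _ _ hx hy => rw [map_add, hx, hy]
    | mul x y _ _ hx hy => rw [map_mul, hx, hy]
  have h1 : Nat.card (f.map φ).Gal ∣ Nat.card f.Gal :=
    Subgroup.card_dvd_of_injective ψ hψ
  -- reduce to the degree of the minimal polynomial
  have hint : IsIntegral ℚ_[p] α := IsIntegral.of_finite _ _
  have hfr : Module.finrank ℚ_[p] ℚ_[p]⟮α⟯ = (minpoly ℚ_[p] α).natDegree :=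
    IntermediateField.adjoin.finrank hint
  have hmin : minpoly ℚ_[p] α ∣ f.map φ := minpoly.dvd _ _ hroot
  have hsp : ((minpoly ℚ_[p] α).map (algebraMap ℚ_[p] L)).Splits :=
    Splits.of_dvd (SplittingField.splits (f.map φ)) (Polynomial.map_ne_zero hg0)
      (Polynomial.map_dvd _ hmin)
  have hd0 : (minpoly ℚ_[p] α).degree ≠ 0 := (minpoly.degree_pos hint).ne'
  obtain ⟨β, hβ⟩ := Splits.exists_eval_eq_zero hsp (by rwa [Polynomial.degree_map])
  have hβ' : Polynomial.aeval β (minpoly ℚ_[p] α) = 0 := by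
    rw [aeval_def, ← eval_map]; exact hβ
  have hintβ : IsIntegral ℚ_[p] β := IsIntegral.of_finite _ _
  have hminβ : minpoly ℚ_[p] β = minpoly ℚ_[p] α :=
    (minpoly.eq_of_irreducible_of_monic (minpoly.irreducible hint) hβ' (minpoly.monic hint)).symm
  have h2 : (minpoly ℚ_[p] α).natDegree ∣ Module.finrank ℚ_[p] L := by
    refine ⟨Module.finrank ℚ_[p]⟮β⟯ L, ?_⟩
    rw [← Module.finrank_mul_finrank ℚ_[p] ℚ_[p]⟮β⟯ L,
      IntermediateField.adjoin.finrank hintβ, hminβ]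
  have hsep : (f.map φ).Separable := hf.separable.map
  have h3 : Module.finrank ℚ_[p] L = Nat.card (f.map φ).Gal := by
    rw [Gal.card_of_separable hsep]
  rw [hfr]
  exact dvd_trans (h3 ▸ h2) h1
end

section
/- Let λ ∈ ℤ and μ ∈ ℤ with μ ≥ 1 and gcd(λ,μ) = 1, let n ∈ ℕ, let ℓ be an integer with 1 ≤ ℓ ≤ n, and suppose p = μℓ + λ is prime. Assume (1-μ)·p < λ + μ and λ + μn < (μ+1)·p. Define c_j = ∏_{k=j+1}^n (kμ+λ) for 0 ≤ j ≤ n. Then ord_p(c_j) = 1 for 0 ≤ j ≤ ℓ-1, and ord_p(c_j) = 0 for ℓ ≤ j ≤ n. -/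
/-!
The factors `kμ + λ` form an arithmetic progression whose difference `μ` is prime to `p`, so
`p` divides `kμ + λ` only when `k ≡ ℓ (mod p)`. The bounds on `p` keep every index `1 ≤ k ≤ n`
within distance `< p` of `ℓ`, so the only factor divisible by `p` is the `ℓ`-th one, which is `p`.
-/

theorem not_dvd_mul_add_of_abs_sub_lt {p mu lam k l : ℤ} (hcop : IsCoprime p mu)
    (hl : p ∣ l * mu + lam) (hkl : k ≠ l) (hlt : |k - l| < p) : ¬p ∣ k * mu + lam := by
  intro hk
  have hdiff : p ∣ (k - l) * mu := by
    rw [sub_mul]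
    simpa using dvd_sub hk hl
  exact hkl (sub_eq_zero.mp (Int.eq_zero_of_abs_lt_dvd (hcop.dvd_of_dvd_mul_right hdiff) hlt))

theorem padicValRat_prod_eq_ite {p : ℕ} [hp : Fact p.Prime] {ι : Type*} [DecidableEq ι]
    (s : Finset ι) (f : ι → ℤ) {i : ι} (hfi : f i = p) (hf : ∀ k ∈ s, k ≠ i → ¬(p : ℤ) ∣ f k) :
    padicValRat p ((∏ k ∈ s, f k : ℤ) : ℚ) = if i ∈ s then 1 else 0 := by
  have hprime : Prime (p : ℤ) := Nat.prime_iff_prime_int.mp hp.out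
  have hrest : ¬(p : ℤ) ∣ ∏ k ∈ s.erase i, f k :=
    hprime.not_dvd_finsetProd fun k hk =>
      hf k (Finset.mem_of_mem_erase hk) (Finset.ne_of_mem_erase hk)
  rw [padicValRat.of_int]
  split_ifs with hi
  · rw [← Finset.mul_prod_erase s f hi, hfi, mul_comm,
      padicValInt_mul_eq_succ _ (fun h => hrest (by simp [h])),
      padicValInt.eq_zero_of_not_dvd hrest, zero_add, Nat.cast_one]
  · exact_mod_cast padicValInt.eq_zero_of_not_dvd
      (hprime.not_dvd_finsetProd fun k hk => hf k hk (ne_of_mem_of_not_mem hk hi))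

theorem padicValRat_prod_eq_general
    (lam mu : ℤ) (hmu : 1 ≤ mu) (hgcd : Int.gcd lam mu = 1)
    (n l : ℕ) (hln : l ≤ n)
    (p : ℕ) (hp : p.Prime) (hpeq : (p : ℤ) = mu * l + lam)
    (hb1 : (1 - mu) * (p : ℤ) < lam + mu)
    (hb2 : lam + mu * n < (mu + 1) * (p : ℤ)) :
    (∀ j : ℕ, j < l →
        padicValRat p ((∏ k ∈ Finset.Icc (j + 1) n, ((k : ℤ) * mu + lam) : ℤ) : ℚ) = 1) ∧
    (∀ j : ℕ, l ≤ j → j ≤ n →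
        padicValRat p ((∏ k ∈ Finset.Icc (j + 1) n, ((k : ℤ) * mu + lam) : ℤ) : ℚ) = 0) := by
  have : Fact p.Prime := ⟨hp⟩
  have hcop : IsCoprime (p : ℤ) mu := by
    rw [hpeq, add_comm]
    exact (Int.isCoprime_iff_gcd_eq_one.mpr hgcd).add_mul_left_left l
  -- dividing the two bounds by `μ` gives `ℓ - 1 < p` and `n - ℓ < p`
  have hdist : ∀ k ∈ Finset.Icc 1 n, |(k : ℤ) - l| < p := by
    intro k hk
    obtain ⟨hk1, hkn⟩ := Finset.mem_Icc.mp hk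
    have hk1' : (1 : ℤ) ≤ k := by exact_mod_cast hk1
    have hkn' : (k : ℤ) ≤ n := by exact_mod_cast hkn
    rw [abs_sub_lt_iff]
    constructor <;> nlinarith
  have hval : ∀ j, padicValRat p ((∏ k ∈ Finset.Icc (j + 1) n, ((k : ℤ) * mu + lam) : ℤ) : ℚ)
      = if l ∈ Finset.Icc (j + 1) n then 1 else 0 := by
    intro j
    refine padicValRat_prod_eq_ite _ _ (by rw [hpeq, mul_comm]) fun k hk hkl => ?_
    have hk : k ∈ Finset.Icc 1 n := Finset.Icc_subset_Icc_left (Nat.le_add_left 1 j) hk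
    exact not_dvd_mul_add_of_abs_sub_lt hcop (by rw [mul_comm, ← hpeq]) (by exact_mod_cast hkl)
      (hdist k hk)
  refine ⟨fun j hj => ?_, fun j hlj _ => ?_⟩ <;> rw [hval j]
  · rw [if_pos (Finset.mem_Icc.mpr ⟨hj, hln⟩)]
  · rw [if_neg fun h => by simp only [Finset.mem_Icc] at h; omega]

/-- Let `λ, μ ∈ ℤ` with `μ ≥ 1` and `gcd(λ,μ) = 1`, let `1 ≤ ℓ ≤ n`, and suppose
`p = μℓ + λ` is prime with `(1-μ)·p < λ + μ` and `λ + μn < (μ+1)·p`.  Setting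
`c_j = ∏_{k=j+1}^n (kμ+λ)`, one has `ord_p(c_j) = 1` for `0 ≤ j ≤ ℓ-1` and
`ord_p(c_j) = 0` for `ℓ ≤ j ≤ n`. -/
theorem padicValRat_prod_eq
    (lam mu : ℤ) (hmu : 1 ≤ mu) (hgcd : Int.gcd lam mu = 1)
    (n l : ℕ) (hl1 : 1 ≤ l) (hln : l ≤ n)
    (p : ℕ) (hp : p.Prime) (hpeq : (p : ℤ) = mu * l + lam)
    (hb1 : (1 - mu) * (p : ℤ) < lam + mu)
    (hb2 : lam + mu * n < (mu + 1) * (p : ℤ)) :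
    (∀ j : ℕ, j < l →
        padicValRat p ((∏ k ∈ Finset.Icc (j + 1) n, ((k : ℤ) * mu + lam) : ℤ) : ℚ) = 1) ∧
    (∀ j : ℕ, l ≤ j → j ≤ n →
        padicValRat p ((∏ k ∈ Finset.Icc (j + 1) n, ((k : ℤ) * mu + lam) : ℤ) : ℚ) = 0) :=
  padicValRat_prod_eq_general lam mu hmu hgcd n l hln p hp hpeq hb1 hb2
end

section
/- Let n be a positive integer and α ∈ ℚ, and suppose α is not an integer in the interval [-n, -2]. Then the generalized Laguerre polynomial L_n^{(α)}(x) has no repeated roots, i.e., L_n^{(α)}(x) is separable over ℚ. -/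
open Polynomial

/-- The generalized Laguerre polynomial
`L_n^{(α)}(x) = ∑_{j=0}^n b_{n,j}(α)·(-x)^j/j!` where
`b_{n,j}(α) = (∏_{i=j+1}^n (α+i))/(n-j)!`. -/
noncomputable def laguerre (α : ℚ) (n : ℕ) : Polynomial ℚ :=
  ∑ j ∈ Finset.range (n + 1),
    Polynomial.C ((∏ i ∈ Finset.Icc (j + 1) n, (α + (i : ℚ))) / (n - j).factorial *
      (-1) ^ j / j.factorial) * Polynomial.X ^ j

lemma coeff_laguerre (α : ℚ) (n k : ℕ) :
    (laguerre α n).coeff k = if k ≤ n then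
      (∏ i ∈ Finset.Icc (k + 1) n, (α + (i : ℚ))) / (n - k).factorial *
      (-1) ^ k / k.factorial else 0 := by
  simp only [laguerre, finset_sum_coeff, coeff_C_mul, coeff_X_pow, mul_ite, mul_one, mul_zero]
  rw [Finset.sum_ite_eq (Finset.range (n + 1)) k]
  simp [Nat.lt_succ_iff]

lemma laguerre_rec (α : ℚ) (n : ℕ) (j : ℕ) :
    ((j : ℚ) + 1) * (α + j + 1) * (laguerre α n).coeff (j + 1)
      + ((n : ℚ) - j) * (laguerre α n).coeff j = 0 := by
  rcases lt_or_ge j n with h | h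
  · rw [coeff_laguerre, coeff_laguerre, if_pos (show j + 1 ≤ n from h), if_pos h.le]
    have hsplit : (α + ((j+1 : ℕ) : ℚ)) * ∏ i ∈ Finset.Icc (j + 2) n, (α + (i : ℚ))
        = ∏ i ∈ Finset.Icc (j + 1) n, (α + (i : ℚ)) := by
      rw [show (j+2) = (j+1)+1 from rfl, Finset.Icc_add_one_left_eq_Ioc]
      exact Finset.mul_prod_Ioc_eq_prod_Icc (f := fun i : ℕ => α + (i : ℚ)) (show j + 1 ≤ n from h)
    have hfac : (n - j).factorial = (n - j) * (n - (j+1)).factorial := by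
      have : n - j = (n - (j+1)) + 1 := by omega
      rw [this, Nat.factorial_succ]
    have hnj : ((n - j : ℕ) : ℚ) = (n : ℚ) - j := by
      push_cast [Nat.cast_sub h.le]
      ring
    rw [hfac]
    have h1 : ((n - j : ℕ) : ℚ) ≠ 0 := by
      rw [hnj]; intro hc
      have : (n : ℚ) = j := by linarith
      exact_mod_cast absurd this (by exact_mod_cast h.ne')
    have h2 : ((n - (j+1)).factorial : ℚ) ≠ 0 := by exact_mod_cast (Nat.factorial_pos _).ne'
    have h3 : ((j+1).factorial : ℚ) ≠ 0 := by exact_mod_cast (Nat.factorial_pos _).ne'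
    have h4 : (j.factorial : ℚ) ≠ 0 := by exact_mod_cast (Nat.factorial_pos _).ne'
    rw [← hsplit, ← hnj]
    push_cast [Nat.factorial_succ]
    field_simp
    ring
  · rw [coeff_laguerre, coeff_laguerre]
    rcases eq_or_lt_of_le h with rfl | h'
    · rw [if_neg (by omega), if_pos le_rfl]
      simp
    · rw [if_neg (by omega), if_neg (by omega)]
      simp

lemma laguerre_ode (α : ℚ) (n : ℕ) :
    X * derivative (derivative (laguerre α n))
      + (C (α + 1) - X) * derivative (laguerre α n)
      + C (n : ℚ) * laguerre α n = 0 := by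
  set L := laguerre α n with hL
  ext k
  rcases k with _ | k
  · simp only [coeff_add, coeff_zero, mul_coeff_zero, coeff_X_zero, zero_mul, coeff_sub,
      sub_mul, coeff_C_mul, coeff_derivative, coeff_C, if_pos rfl]
    have := laguerre_rec α n 0
    push_cast at this ⊢
    linear_combination this
  · simp only [coeff_add, coeff_zero, coeff_X_mul, coeff_sub, sub_mul, coeff_C_mul,
      coeff_derivative, Polynomial.coeff_X_mul]
    have := laguerre_rec α n (k + 1)
    push_cast at this ⊢
    linear_combination this

lemma laguerre_ode_iter (α : ℚ) (n : ℕ) (k : ℕ) :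
    X * derivative^[k + 2] (laguerre α n)
      + (C (α + 1 + k) - X) * derivative^[k + 1] (laguerre α n)
      + C ((n : ℚ) - k) * derivative^[k] (laguerre α n) = 0 := by
  induction k with
  | zero =>
    simpa using laguerre_ode α n
  | succ k ih =>
    have h := congrArg derivative ih
    simp only [derivative_add, derivative_mul, derivative_X, derivative_sub, derivative_C,
      derivative_zero, ← Function.iterate_succ_apply'] at h
    simp only [show k + 1 + 2 = k + 2 + 1 from rfl, show k + 1 + 1 = k + 1 + 1 from rfl]
    push_cast
    simp only [map_add, map_sub, map_one]
    simp only [map_add, map_sub, map_one] at h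
    linear_combination h

lemma laguerre_natDegree_le (α : ℚ) (n : ℕ) : (laguerre α n).natDegree ≤ n := by
  apply (Polynomial.natDegree_sum_le _ _).trans
  rw [Finset.fold_max_le]
  refine ⟨Nat.zero_le _, fun j hj => ?_⟩
  simp only [Function.comp_apply]
  exact (natDegree_C_mul_X_pow_le _ _).trans (by simp at hj; omega)

lemma laguerre_iter_deriv (α : ℚ) (n : ℕ) :
    derivative^[n] (laguerre α n) = C ((-1) ^ n) := by
  have h0 : (derivative^[n] (laguerre α n)).natDegree ≤ 0 :=
    (natDegree_iterate_derivative _ _).trans (by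
      have := laguerre_natDegree_le α n; omega)
  rw [Polynomial.eq_C_of_natDegree_le_zero h0]
  congr 1
  rw [Polynomial.coeff_iterate_derivative]
  simp only [zero_add, Nat.descFactorial_self, coeff_laguerre, le_refl, if_pos,
    Finset.Icc_eq_empty (by omega : ¬ n + 1 ≤ n), Finset.prod_empty, Nat.sub_self,
    Nat.factorial_zero, Nat.cast_one, smul_eq_mul, nsmul_eq_mul]
  have : (n.factorial : ℚ) ≠ 0 := by exact_mod_cast (Nat.factorial_pos n).ne'
  field_simp

/-- If `n` is a positive integer and `α ∈ ℚ` is not an integer in `[-n, -2]`,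
then `L_n^{(α)}` has no repeated roots, i.e. it is separable over `ℚ`. -/
theorem laguerre_separable
    (n : ℕ) (hn : 0 < n) (α : ℚ)
    (hα : ¬∃ m : ℤ, α = (m : ℚ) ∧ -(n : ℤ) ≤ m ∧ m ≤ -2) :
    (laguerre α n).Separable := by
  set L := laguerre α n with hLdef
  have hfacne : ∀ m : ℕ, (m.factorial : ℚ) ≠ 0 := fun m => by
    exact_mod_cast (Nat.factorial_pos m).ne'
  have hLne : L ≠ 0 := by
    intro h
    have hc := coeff_laguerre α n n
    rw [← hLdef, h] at hc
    simp only [coeff_zero, le_refl, if_pos, Finset.Icc_eq_empty (by omega : ¬ n + 1 ≤ n),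
      Finset.prod_empty, Nat.sub_self, Nat.factorial_zero, Nat.cast_one] at hc
    have h1 : ((-1 : ℚ)) ^ n ≠ 0 := by positivity
    field_simp at hc
    exact h1 (by rw [zero_mul] at hc; exact hc.symm)
  rw [PerfectField.separable_iff_squarefree]
  rw [squarefree_iff_irreducible_sq_not_dvd_of_ne_zero hLne]
  intro p hp hdvd
  have hprime : Prime p := UniqueFactorizationMonoid.irreducible_iff_prime.mp hp
  have hdL : p ∣ L := dvd_trans (dvd_mul_right p p) hdvd
  have hdL' : p ∣ derivative L := by
    obtain ⟨q, hq⟩ := hdvd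
    rw [hq, derivative_mul, derivative_mul]
    exact dvd_add ((dvd_add (dvd_mul_left p _) (dvd_mul_right p _)).mul_right q)
      ((dvd_mul_right p p).mul_right _)
  by_cases hX : p ∣ X
  · have hassoc : Associated p X := hp.associated_of_dvd Polynomial.irreducible_X hX
    have hXL' : X ∣ derivative L := (hassoc.dvd_iff_dvd_left).mp hdL'
    rw [Polynomial.X_dvd_iff, coeff_derivative] at hXL'
    simp only [zero_add] at hXL'
    rw [coeff_laguerre, if_pos (show 1 ≤ n from hn)] at hXL'
    have hprod : (∏ i ∈ Finset.Icc 2 n, (α + (i : ℚ))) = 0 := by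
      have h1 := hfacne (n - 1)
      have h2 := hfacne 1
      field_simp at hXL'
      simpa using hXL'
    rw [Finset.prod_eq_zero_iff] at hprod
    obtain ⟨i, hi, hie⟩ := hprod
    simp only [Finset.mem_Icc] at hi
    exact hα ⟨-(i : ℤ), by push_cast; linarith, by omega, by omega⟩
  · have main : ∀ k, p ∣ derivative^[k] L ∧ p ∣ derivative^[k + 1] L := by
      intro k
      induction k with
      | zero => simpa using ⟨hdL, hdL'⟩
      | succ k ih =>
        refine ⟨ih.2, ?_⟩
        have h := laguerre_ode_iter α n k
        have heq : X * derivative^[k + 2] L =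
            -((C (α + 1 + k) - X) * derivative^[k + 1] L + C ((n : ℚ) - k) * derivative^[k] L) := by
          linear_combination h
        have hd : p ∣ X * derivative^[k + 2] L := by
          rw [heq]
          exact dvd_neg.mpr (dvd_add (Dvd.dvd.mul_left ih.2 _) (Dvd.dvd.mul_left ih.1 _))
        have := (hprime.dvd_mul.mp hd).resolve_left hX
        simpa [show k + 1 + 1 = k + 2 from rfl] using this
    have hconst := (main n).1
    rw [hLdef, laguerre_iter_deriv] at hconst
    exact hp.not_isUnit (isUnit_of_dvd_unit hconst
      (Polynomial.isUnit_C.mpr ((isUnit_one.neg).pow n)))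
end

section
/- For every n ∈ ℕ, the generalized Laguerre polynomial with parameter α = -1-n satisfies (-1)^n · L_n^{(-1-n)}(x) = Σ_{j=0}^n x^j/j!, i.e., it equals the n-th Taylor polynomial of the exponential function. -/
open Polynomial

private lemma prodlem_laguerre (d j : ℕ) :
    ∏ i ∈ Finset.Icc (j + 1) (j + d), ((-1 : ℚ) - (j + d : ℕ) + (i : ℚ)) =
      (-1) ^ d * d.factorial := by
  induction d generalizing j with
  | zero => simp
  | succ d ih =>
    have h1 : j + 1 ≤ j + (d + 1) := by omega
    rw [show j + (d + 1) = (j + 1) + d by ring] at *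
    rw [← Finset.Ioc_insert_left h1, Finset.prod_insert (by simp),
      ← Finset.Icc_add_one_left_eq_Ioc, ih (j + 1)]
    push_cast
    rw [Nat.factorial_succ]
    push_cast
    ring

/-- For every `n`, `(-1)^n · L_n^{(-1-n)}(x) = ∑_{j=0}^n x^j/j!`, the `n`-th
Taylor polynomial of the exponential function. -/
theorem neg_one_pow_smul_laguerre_eq_taylor_exp (n : ℕ) :
    ((-1 : ℚ) ^ n) • laguerre (-1 - (n : ℚ)) n =
      ∑ j ∈ Finset.range (n + 1), Polynomial.C ((j.factorial : ℚ)⁻¹) * Polynomial.X ^ j := by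
  unfold laguerre
  rw [Finset.smul_sum]
  refine Finset.sum_congr rfl fun j hj => ?_
  have hjn : j ≤ n := by simpa using Nat.lt_succ_iff.mp (Finset.mem_range.mp hj)
  have key : ∏ i ∈ Finset.Icc (j + 1) n, ((-1 : ℚ) - (n : ℚ) + (i : ℚ)) =
      (-1) ^ (n - j) * (n - j).factorial := by
    have := prodlem_laguerre (n - j) j
    rw [show j + (n - j) = n from by omega] at this
    exact this
  rw [key, smul_eq_C_mul, ← mul_assoc, ← Polynomial.C_mul]
  congr 1
  have hf : ((n - j).factorial : ℚ) ≠ 0 := Nat.cast_ne_zero.mpr (n - j).factorial_ne_zero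
  field_simp
  rw [show ((-1 : ℚ) ^ n * (-1) ^ (n - j) * (-1) ^ j) = (-1) ^ (2 * n) from by rw [← pow_add, ← pow_add]; congr 1; omega]
  simp [pow_mul]
end
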